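/- arXiv:2601.17600 — 2 statements merged into one kernel-verified Lean document; each statement's English description precedes it below -/
import Mathlib

section
/- Let G be a group of nilpotency class at most 2 with R-exponentiation satisfying F0 ((gz)^α = g^α z^α for z central) and F3 ([g^α,h]=[g,h]^α), and such that α-commutators are central. If (xy)^{αβ} = ((xy)^α)^β and x^{αβ} = (x^α)^β for the relevant elements, then the α-commutator satisfies (g,h)_{αβ} = (g^α, h^α)_β · ((g,h)_α)^β for all g, h ∈ G and α, β ∈ R. -/
/-! Since `(g,h)_α` is central, F0 applied to `(gh)^{αβ} = ((gh)^α)^β = (g^α h^α (g,h)_α)^β`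
splits off `((g,h)_α)^β`, and the remaining `(g^α h^α)^β` is `g^{αβ} h^{αβ} (g^α, h^α)_β`. -/

/-- The paper's commutator convention: [g,h] = g⁻¹h⁻¹gh. -/
def pcomm {G : Type*} [Group G] (g h : G) : G := g⁻¹ * h⁻¹ * g * h

/-- The α-commutator (g,h)_α = h^{-α} g^{-α} (gh)^α, with g^{-α} := (g^α)⁻¹. -/
def acomm {G R : Type*} [Group G] (e : G → R → G) (g h : G) (α : R) : G :=
  (e h α)⁻¹ * (e g α)⁻¹ * e (g * h) α

/-- The c-commutator c(g,h)_α = [g,h]^{C(α,2)} (g,h)_α, where C2 α plays the role of C(α,2). -/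
def ccomm {G R : Type*} [Group G] (e : G → R → G) (C2 : R → R) (g h : G) (α : R) : G :=
  e (pcomm g h) (C2 α) * acomm e g h α

section

variable {G R : Type*} [Group G] (e : G → R → G)

theorem acomm_eq_iff (g h c : G) (α : R) :
    acomm e g h α = c ↔ e (g * h) α = e g α * e h α * c := by
  rw [acomm, mul_assoc, inv_mul_eq_iff_eq_mul, inv_mul_eq_iff_eq_mul, ← mul_assoc]

theorem exp_mul_eq_mul_mul_acomm (g h : G) (α : R) :
    e (g * h) α = e g α * e h α * acomm e g h α :=
  (acomm_eq_iff e g h _ α).1 rfl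

end

theorem stmt5_general {G R : Type*} [Group G] [CommRing R] (e : G → R → G)
    (hF0 : ∀ (g z : G), z ∈ Subgroup.center G → ∀ α : R, e (g * z) α = e g α * e z α)
    (hcent : ∀ (g h : G) (α : R), acomm e g h α ∈ Subgroup.center G)
    (hmul : ∀ (g : G) (α β : R), e (e g α) β = e g (α * β)) :
    ∀ (g h : G) (α β : R),
      acomm e g h (α * β) = acomm e (e g α) (e h α) β * e (acomm e g h α) β := by
  intro g h α β
  rw [acomm_eq_iff]
  calc e (g * h) (α * β)
      = e (e g α * e h α * acomm e g h α) β := by rw [← hmul, exp_mul_eq_mul_mul_acomm e]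
    _ = e (e g α * e h α) β * e (acomm e g h α) β := hF0 _ _ (hcent g h α) β
    _ = e (e g α) β * e (e h α) β * acomm e (e g α) (e h α) β * e (acomm e g h α) β := by
      rw [exp_mul_eq_mul_mul_acomm e]
    _ = e g (α * β) * e h (α * β) *
          (acomm e (e g α) (e h α) β * e (acomm e g h α) β) := by
      rw [hmul, hmul, mul_assoc]

theorem stmt5 {G R : Type*} [Group G] [CommRing R] (e : G → R → G)
    (hnil : ∀ g h : G, pcomm g h ∈ Subgroup.center G)
    (hF0 : ∀ (g z : G), z ∈ Subgroup.center G → ∀ α : R, e (g * z) α = e g α * e z α)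
    (hF3 : ∀ (g h : G) (α : R), pcomm (e g α) h = e (pcomm g h) α)
    (hcent : ∀ (g h : G) (α : R), acomm e g h α ∈ Subgroup.center G)
    (hadd : ∀ (g : G) (α β : R), e g (α + β) = e g α * e g β)
    (hmul : ∀ (g : G) (α β : R), e (e g α) β = e g (α * β)) :
    ∀ (g h : G) (α β : R),
      acomm e g h (α * β) = acomm e (e g α) (e h α) β * e (acomm e g h α) β :=
  stmt5_general e hF0 hcent hmul
end

section
/- Let G be a group of nilpotency class at most 2, R a commutative ring, and suppose the R-exponentiation satisfies F0 ((gz)^α = g^α z^α for central z), F3, and the ring axioms 2.1–2.2 restricted to products. Then the commutativity of R forces the c-commutator identity c(f,h)_α^β · c(f^α, h^α)_β = c(f,h)_β^α · c(f^β, h^β)_α for all f, h ∈ G, α, β ∈ R, where c-commutator exponents are taken in the central R-module Z(G). -/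
section Commutator

variable {G : Type*} [Group G]

theorem pcomm_inv (a b : G) : (pcomm a b)⁻¹ = pcomm b a := by
  unfold pcomm; group

theorem commute_of_pcomm_eq_one {a b : G} (h : pcomm a b = 1) : Commute a b := by
  have h' : a⁻¹ * b⁻¹ * a * b = 1 := h
  calc a * b = b * a * (a⁻¹ * b⁻¹ * a * b) := by group
    _ = b * a := by rw [h', mul_one]

theorem pcomm_eq_one_of_mem_center {z : G} (hz : z ∈ Subgroup.center G) (g : G) :
    pcomm z g = 1 := by
  have hcomm : g * z = z * g := Subgroup.mem_center_iff.mp hz g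
  unfold pcomm
  rw [mul_assoc, ← hcomm]
  group

theorem mul_mul_mul_comm_of_mem_center {a : G} (ha : a ∈ Subgroup.center G) (p q b : G) :
    p * a * (q * b) = p * q * (a * b) := by
  calc p * a * (q * b) = p * ((a * q) * b) := by group
    _ = p * ((q * a) * b) := by rw [Subgroup.mem_center_iff.mp ha q]
    _ = p * q * (a * b) := by group

end Commutator

section Exponentiation

variable {G R : Type*} [Group G] (e : G → R → G)

/-- Axiom F0. -/
def ExpMulCentral : Prop :=
  ∀ g z : G, z ∈ Subgroup.center G → ∀ α : R, e (g * z) α = e g α * e z α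

/-- Axiom F3. -/
def PcommExp : Prop := ∀ (g h : G) (α : R), pcomm (e g α) h = e (pcomm g h) α

def AcommCentral : Prop := ∀ (g h : G) (α : R), acomm e g h α ∈ Subgroup.center G

def ExpExp [Mul R] : Prop := ∀ (g : G) (α β : R), e (e g α) β = e g (α * β)

def CenterExpAdd [Add R] : Prop :=
  ∀ z : G, z ∈ Subgroup.center G → ∀ α β : R, e z (α + β) = e z α * e z β

def CenterExpExp [Mul R] : Prop :=
  ∀ z : G, z ∈ Subgroup.center G → ∀ α β : R, e (e z α) β = e z (α * β)

variable {e}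

theorem exp_mul_eq_mul_acomm (g k : G) (γ : R) :
    e (g * k) γ = e g γ * e k γ * acomm e g k γ := by
  unfold acomm; group

theorem exp_one (hF0 : ExpMulCentral e) (γ : R) : e 1 γ = 1 := by
  have h := hF0 1 1 (Subgroup.one_mem _) γ
  rw [one_mul] at h
  exact left_eq_mul.mp h

theorem exp_mem_center (hF0 : ExpMulCentral e) (hF3 : PcommExp e) {z : G}
    (hz : z ∈ Subgroup.center G) (γ : R) : e z γ ∈ Subgroup.center G := by
  refine Subgroup.mem_center_iff.mpr fun g => (commute_of_pcomm_eq_one ?_).symm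
  rw [hF3, pcomm_eq_one_of_mem_center hz, exp_one hF0]

theorem exp_inv_of_mem_center (hF0 : ExpMulCentral e) {z : G} (hz : z ∈ Subgroup.center G)
    (γ : R) : e z⁻¹ γ = (e z γ)⁻¹ := by
  have h := hF0 z z⁻¹ (Subgroup.inv_mem _ hz) γ
  rw [mul_inv_cancel, exp_one hF0] at h
  exact eq_inv_of_mul_eq_one_right h.symm

theorem pcomm_exp_exp [Mul R] (hF0 : ExpMulCentral e) (hF3 : PcommExp e)
    (hzmul : CenterExpExp e) {f h : G} (hw : pcomm f h ∈ Subgroup.center G) (γ : R) :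
    pcomm (e f γ) (e h γ) = e (pcomm f h) (γ * γ) := by
  have hleft : pcomm f (e h γ) = e (pcomm f h) γ := by
    rw [← pcomm_inv, hF3, ← pcomm_inv, exp_inv_of_mem_center hF0 hw, inv_inv]
  rw [hF3, hleft, hzmul _ hw]

/-- The cocycle rule for α-commutators: expand `((fh)^γ)^δ` once via `(fh)^γ` and once
directly as `(fh)^{γδ}`. -/
theorem acomm_mul [Mul R] (hF0 : ExpMulCentral e) (hcent : AcommCentral e) (hmul : ExpExp e)
    (f h : G) (γ δ : R) :
    acomm e f h (γ * δ) = e (acomm e f h γ) δ * acomm e (e f γ) (e h γ) δ := by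
  have hexpand : e (f * h) (γ * δ) = e f (γ * δ) * e h (γ * δ) *
      (e (acomm e f h γ) δ * acomm e (e f γ) (e h γ) δ) := by
    rw [← hmul (f * h) γ δ, exp_mul_eq_mul_acomm (e := e) f h γ, hF0 _ _ (hcent f h γ) δ,
      exp_mul_eq_mul_acomm (e := e) (e f γ) (e h γ) δ, hmul f, hmul h,
      mul_assoc, ← Subgroup.mem_center_iff.mp (hcent (e f γ) (e h γ) δ)]
  exact mul_left_cancel ((exp_mul_eq_mul_acomm f h (γ * δ)).symm.trans hexpand)

theorem exp_ccomm_mul_ccomm [Add R] [Mul R] (C2 : R → R) (hF0 : ExpMulCentral e)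
    (hF3 : PcommExp e) (hcent : AcommCentral e) (hmul : ExpExp e) (hzadd : CenterExpAdd e)
    (hzmul : CenterExpExp e) {f h : G} (hw : pcomm f h ∈ Subgroup.center G) (γ δ : R) :
    e (ccomm e C2 f h γ) δ * ccomm e C2 (e f γ) (e h γ) δ =
      e (pcomm f h) (C2 γ * δ + γ * γ * C2 δ) * acomm e f h (γ * δ) := by
  unfold ccomm
  rw [hF0 _ _ (hcent f h γ) δ, hzmul _ hw, pcomm_exp_exp hF0 hF3 hzmul hw, hzmul _ hw,
    mul_mul_mul_comm_of_mem_center (exp_mem_center hF0 hF3 (hcent f h γ) δ), ← hzadd _ hw,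
    ← acomm_mul hF0 hcent hmul]

end Exponentiation

theorem stmt10_general {G R : Type*} [Group G] [CommRing R] (e : G → R → G) (C2 : R → R)
    (hC2 : ∀ α : R, C2 α + C2 α = α * α - α)
    (hnil : ∀ g h : G, pcomm g h ∈ Subgroup.center G)
    (hF0 : ∀ (g z : G), z ∈ Subgroup.center G → ∀ α : R, e (g * z) α = e g α * e z α)
    (hF3 : ∀ (g h : G) (α : R), pcomm (e g α) h = e (pcomm g h) α)
    (hcent : ∀ (g h : G) (α : R), acomm e g h α ∈ Subgroup.center G)
    (hmul : ∀ (g : G) (α β : R), e (e g α) β = e g (α * β))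
    (hzadd : ∀ z : G, z ∈ Subgroup.center G → ∀ α β : R, e z (α + β) = e z α * e z β)
    (hzmul : ∀ z : G, z ∈ Subgroup.center G → ∀ α β : R, e (e z α) β = e z (α * β)) :
    ∀ (f h : G) (α β : R),
      e (ccomm e C2 f h α) β * ccomm e C2 (e f α) (e h α) β =
        e (ccomm e C2 f h β) α * ccomm e C2 (e f β) (e h β) α := by
  intro f h α β
  have hsymm : C2 α * β + α * α * C2 β = C2 β * α + β * β * C2 α := by
    linear_combination C2 α * hC2 β - C2 β * hC2 α
  rw [exp_ccomm_mul_ccomm C2 hF0 hF3 hcent hmul hzadd hzmul (hnil f h),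
    exp_ccomm_mul_ccomm C2 hF0 hF3 hcent hmul hzadd hzmul (hnil f h), hsymm, mul_comm α β]

theorem stmt10 {G R : Type*} [Group G] [CommRing R] (e : G → R → G) (C2 : R → R)
    (hC2 : ∀ α : R, C2 α + C2 α = α * α - α)
    (hnil : ∀ g h : G, pcomm g h ∈ Subgroup.center G)
    (hF0 : ∀ (g z : G), z ∈ Subgroup.center G → ∀ α : R, e (g * z) α = e g α * e z α)
    (hF3 : ∀ (g h : G) (α : R), pcomm (e g α) h = e (pcomm g h) α)
    (hcent : ∀ (g h : G) (α : R), acomm e g h α ∈ Subgroup.center G)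
    (hadd : ∀ (g : G) (α β : R), e g (α + β) = e g α * e g β)
    (hmul : ∀ (g : G) (α β : R), e (e g α) β = e g (α * β))
    (hzadd : ∀ z : G, z ∈ Subgroup.center G → ∀ α β : R, e z (α + β) = e z α * e z β)
    (hzmul : ∀ z : G, z ∈ Subgroup.center G → ∀ α β : R, e (e z α) β = e z (α * β)) :
    ∀ (f h : G) (α β : R),
      e (ccomm e C2 f h α) β * ccomm e C2 (e f α) (e h α) β =
        e (ccomm e C2 f h β) α * ccomm e C2 (e f β) (e h β) α :=
  stmt10_general e C2 hC2 hnil hF0 hF3 hcent hmul hzadd hzmul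
end
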